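/- arXiv:0907.3576 — 2 statements merged into one kernel-verified Lean document; each statement's English description precedes it below -/
import Mathlib

section
/- Let T, T_c > 0, let φ₁,…,φ_N ∈ L²(ℝ) satisfy α·I ⪯ M_φ(ω) ⪯ β·I for a.e. ω ∈ [−π/T, π/T] for some 0 < α ≤ β < ∞, and set ψ_n = P_{π/T_c} φ_n for 1 ≤ n ≤ N. If there exist constants 0 < α' ≤ β' < ∞ such that α'·I ⪯ M_ψ(ω) ⪯ β'·I for a.e. ω ∈ [−π/T, π/T], then π/T_c ≥ N·π/T (equivalently, N·T_c ≤ T). -/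
/-!
Since `ψ̂ₙ` vanishes outside `[-B, B]`, `B = π / T_c`, the Grammian `M_ψ(ω)` is the Gram matrix
`AᴴA` of the vectors `vₖ = (ψ̂ₙ(ω - 2πk/T))ₙ`, and only the `k` with `ω - 2πk/T ∈ [-B, B]`
contribute a row to `A`. The lower Riesz bound makes `M_ψ(ω)` invertible, so `A` has rank `N` and
there are at least `N` such `k`. Integrating this count over one period of length `2π/T` folds
the translates of `[-B, B]` into a single period without overlap, so the integral is at most `2B`:
`N · 2π/T ≤ 2π/T_c`.
-/

open MeasureTheory Real
open scoped ComplexOrder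

/-- Fourier transform with convention `φ̂(ω) = ∫ φ(t) e^{-iωt} dt`. -/
noncomputable def FT (φ : ℝ → ℂ) (ω : ℝ) : ℂ :=
  ∫ t : ℝ, φ t * Complex.exp (-(Complex.I * ω * t))

/-- Ideal lowpass filter with cutoff `B`: inverse Fourier transform of the
truncation of `φ̂` to `[-B, B]`. -/
noncomputable def lowpass (B : ℝ) (φ : ℝ → ℂ) (t : ℝ) : ℂ :=
  (1 / (2 * π)) * ∫ ω in Set.Icc (-B) B, FT φ ω * Complex.exp (Complex.I * ω * t)

/-- Grammian matrix `[M_φ(ω)]_{ij} = ∑_{k∈ℤ} conj(φ̂_i(ω-2πk/T))·φ̂_j(ω-2πk/T)`. -/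
noncomputable def gram (T : ℝ) {N : ℕ} (φ : Fin N → ℝ → ℂ) (ω : ℝ) :
    Matrix (Fin N) (Fin N) ℂ :=
  Matrix.of fun i j =>
    ∑' k : ℤ, (starRingEnd ℂ) (FT (φ i) (ω - 2 * π * k / T)) * FT (φ j) (ω - 2 * π * k / T)

open Set
open scoped FourierTransform ENNReal

lemma FT_eq_fourier (f : ℝ → ℂ) (ω : ℝ) : FT f ω = 𝓕 f (ω / (2 * π)) := by
  rw [Real.fourier_real_eq_integral_exp_smul, FT]
  congr 1; ext t
  rw [smul_eq_mul, mul_comm]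
  congr 1
  push_cast
  field_simp

lemma FT_of_not_integrable {f : ℝ → ℂ} (hf : ¬ Integrable f) (ω : ℝ) : FT f ω = 0 := by
  refine integral_undef fun h ↦ hf ?_
  refine (h.mul_bdd (c := 1) (g := fun t : ℝ ↦ Complex.exp (Complex.I * ω * t)) (by fun_prop)
    (ae_of_all _ fun t ↦ ?_)).congr (ae_of_all _ fun t ↦ ?_)
  · simpa [mul_assoc] using (Complex.norm_exp_I_mul_ofReal (ω * t)).le
  · simp [mul_assoc, ← Complex.exp_add]

lemma continuous_FT (f : ℝ → ℂ) : Continuous (FT f) := by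
  by_cases hf : Integrable f
  · rw [funext (FT_eq_fourier f)]
    exact (VectorFourier.fourierIntegral_continuous Real.continuous_fourierChar
      continuous_inner hf).comp (by fun_prop)
  · rw [show FT f = fun _ ↦ 0 from funext (FT_of_not_integrable hf)]
    exact continuous_const

/-- Mathlib's `𝓕⁻` has kernel `e^{2πivt}`; the substitution `ω = 2πv` absorbs the `1 / (2π)`. -/
lemma lowpass_eq_fourierInv (B : ℝ) (φ : ℝ → ℂ) :
    lowpass B φ = 𝓕⁻ fun v ↦ (Icc (-B) B).indicator (FT φ) (2 * π * v) := by
  ext t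
  let G : ℝ → ℂ := (Icc (-B) B).indicator fun ω ↦ FT φ ω * Complex.exp (Complex.I * ω * t)
  have hG : 𝓕⁻ (fun v ↦ (Icc (-B) B).indicator (FT φ) (2 * π * v)) t = ∫ v, G (2 * π * v) := by
    rw [fourierInv_eq']
    congr 1; ext v
    simp only [G, indicator, smul_eq_mul]
    split_ifs <;> simp [mul_comm, mul_left_comm, mul_assoc]
  rw [hG, Measure.integral_comp_mul_left, lowpass, integral_indicator measurableSet_Icc]
  simp [abs_of_pos pi_pos]

lemma FT_lowpass_eq_zero_of_notMem {B ξ : ℝ} (φ : ℝ → ℂ) (hξ : ξ ∉ Icc (-B) B) :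
    FT (lowpass B φ) ξ = 0 := by
  by_cases hψ : Integrable (lowpass B φ)
  swap
  · exact FT_of_not_integrable hψ ξ
  set h : ℝ → ℂ := fun v ↦ (Icc (-B) B).indicator (FT φ) (2 * π * v)
  rw [lowpass_eq_fourierInv] at hψ
  have hh : Integrable h :=
    ((integrable_indicator_iff measurableSet_Icc).2
      ((continuous_FT φ).integrableOn_Icc)).comp_mul_left' (by positivity)
  have hFh : Integrable (𝓕 h) := by
    simpa [Real.fourierInv_eq_fourier_neg] using hψ.comp_neg
  have hcont : ContinuousAt h (ξ / (2 * π)) := by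
    refine continuousAt_const (y := (0 : ℂ)) |>.congr ?_
    have hopen : IsOpen {v : ℝ | 2 * π * v ∉ Icc (-B) B} :=
      (isClosed_Icc.preimage (continuous_const_mul _)).isOpen_compl
    filter_upwards [hopen.mem_nhds (show 2 * π * (ξ / (2 * π)) ∉ Icc (-B) B by
      rwa [mul_div_cancel₀ _ two_pi_pos.ne'])] with v hv
    exact (indicator_of_notMem hv _).symm
  rw [FT_eq_fourier, lowpass_eq_fourierInv, hh.fourier_fourierInv_eq hFh hcont]
  exact indicator_of_notMem (by rwa [mul_div_cancel₀ _ two_pi_pos.ne']) _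

namespace Matrix

variable {m n R : Type*} [Fintype m] [Fintype n] [DecidableEq n]
  [Field R] [PartialOrder R] [StarRing R] [StarOrderedRing R]

theorem card_le_card_of_posSemidef_conjTranspose_mul_self_sub (A : Matrix m n R) {c : R}
    (hc : 0 < c) (h : (Aᴴ * A - c • 1).PosSemidef) : Fintype.card n ≤ Fintype.card m := by
  have hpd : (Aᴴ * A).PosDef := by
    simpa using PosDef.posSemidef_add h (PosDef.one.smul hc)
  calc Fintype.card n = (Aᴴ * A).rank := (rank_of_isUnit _ hpd.isUnit).symm
    _ = A.rank := rank_conjTranspose_mul_self A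
    _ ≤ Fintype.card m := rank_le_card_height A

theorem card_le_encard_of_posSemidef_gram_sub [TopologicalSpace R] {ι : Type*} (v : ι → n → R)
    {K : Set ι} (hv : ∀ k ∉ K, v k = 0) {c : R} (hc : 0 < c)
    (h : (of (fun i j ↦ ∑' k, star (v k i) * v k j) - c • 1).PosSemidef) :
    (Fintype.card n : ℕ∞) ≤ K.encard := by
  rcases K.finite_or_infinite with hK | hK
  · let A : Matrix hK.toFinset n R := of fun k i ↦ v k i
    have hgram : of (fun i j ↦ ∑' k, star (v k i) * v k j) = Aᴴ * A := by
      ext i j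
      rw [of_apply, tsum_eq_sum (s := hK.toFinset) fun k hk ↦ by simp [hv k (by simpa using hk)],
        mul_apply, ← Finset.sum_coe_sort]
      rfl
    rw [hK.encard_eq_coe_toFinset_card]
    exact_mod_cast (Fintype.card_coe _) ▸
      A.card_le_card_of_posSemidef_conjTranspose_mul_self_sub hc (hgram ▸ h)
  · simp [hK.encard_eq]

end Matrix

lemma natCast_le_encard_of_posSemidef_gram_sub {T B c ω : ℝ} {N : ℕ} {ψ : Fin N → ℝ → ℂ}
    (hψ : ∀ n, ∀ ξ ∉ Icc (-B) B, FT (ψ n) ξ = 0) (hc : 0 < c)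
    (h : (gram T ψ ω - (c : ℂ) • 1).PosSemidef) :
    (N : ℕ∞) ≤ {k : ℤ | ω - k * (2 * π / T) ∈ Icc (-B) B}.encard := by
  have hk : ∀ k : ℤ, 2 * π * k / T = k * (2 * π / T) := fun k ↦ by ring
  simp_rw [gram, hk] at h
  simpa only [Fintype.card_fin] using Matrix.card_le_encard_of_posSemidef_gram_sub
    (fun (k : ℤ) n ↦ FT (ψ n) (ω - k * (2 * π / T)))
    (K := {k : ℤ | ω - k * (2 * π / T) ∈ Icc (-B) B}) (fun k hk ↦ funext fun n ↦ hψ n _ hk)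
    (Complex.zero_lt_real.2 hc) h

lemma lintegral_encard_le_volume (a p : ℝ) {E : Set ℝ} (hE : MeasurableSet E) :
    ∫⁻ ω in Ioc a (a + p), ({k : ℤ | ω - k * p ∈ E}.encard : ℝ≥0∞) ≤ volume E := by
  -- `S k` is the cell `(a, a + p]` translated by `-k p`; these cells tile `ℝ`.
  let S : ℤ → Set ℝ := fun k ↦ Ioc (a + (-k) • p) (a + (-k + 1) • p)
  have hS : Pairwise (Function.onFun Disjoint S) :=
    (pairwise_disjoint_Ioc_add_zsmul a p).comp_of_injective neg_injective
  have hshift : ∀ k : ℤ, ∫⁻ ω in Ioc a (a + p), E.indicator 1 (ω - k * p) = volume (E ∩ S k) := by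
    intro k
    have hpre : MeasurableSet ((· - k * p) ⁻¹' E) := measurable_sub_const _ hE
    rw [← measure_preimage_add_right _ (-(k * p)), show (fun ω ↦ E.indicator 1 (ω - k * p)) = ((· - k * p) ⁻¹' E).indicator (1 : ℝ → ℝ≥0∞)
      from rfl, lintegral_indicator_one hpre, Measure.restrict_apply hpre]
    congr 1
    ext x
    simp only [S, ← sub_eq_add_neg, mem_inter_iff, mem_preimage, mem_Ioc, zsmul_eq_mul,
      Int.cast_neg, Int.cast_add, Int.cast_one]
    constructor <;> rintro ⟨h1, h2, h3⟩ <;> refine ⟨h1, ?_, ?_⟩ <;> linarith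
  calc ∫⁻ ω in Ioc a (a + p), ({k : ℤ | ω - k * p ∈ E}.encard : ℝ≥0∞)
      = ∑' k : ℤ, ∫⁻ ω in Ioc a (a + p), E.indicator 1 (ω - k * p) := by
        have hcount : ∀ ω, ({k : ℤ | ω - k * p ∈ E}.encard : ℝ≥0∞) =
            ∑' k : ℤ, E.indicator 1 (ω - k * p) := fun ω ↦ by
          rw [← ENNReal.tsum_set_one, tsum_subtype _ fun _ ↦ (1 : ℝ≥0∞)]
          rfl
        simp_rw [hcount]
        exact lintegral_tsum fun k ↦
          ((measurable_const.indicator hE).comp (measurable_sub_const _)).aemeasurable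
    _ = ∑' k : ℤ, volume (E ∩ S k) := by simp_rw [hshift]
    _ ≤ volume (⋃ k, E ∩ S k) :=
        tsum_meas_le_meas_iUnion_of_disjoint _ (fun k ↦ hE.inter measurableSet_Ioc)
          fun k l hkl ↦ (hS hkl).mono inter_subset_right inter_subset_right
    _ ≤ volume E := measure_mono (iUnion_subset fun k ↦ inter_subset_left)

theorem statement1_general (T Tc : ℝ) (hT : 0 < T) (hTc : 0 < Tc) (N : ℕ)
    (φ : Fin N → ℝ → ℂ)
    (α' β' : ℝ) (hα' : 0 < α')
    (hGramψ : ∀ᵐ ω : ℝ, ω ∈ Set.Icc (-(π / T)) (π / T) →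
      (gram T (fun n => lowpass (π / Tc) (φ n)) ω - (α' : ℂ) • 1).PosSemidef ∧
      ((β' : ℂ) • 1 - gram T (fun n => lowpass (π / Tc) (φ n)) ω).PosSemidef) :
    (N : ℝ) * Tc ≤ T := by
  set B := π / Tc
  set p := 2 * π / T
  set I := Ioc (-(π / T)) (-(π / T) + p)
  have hI : I ⊆ Icc (-(π / T)) (π / T) :=
    Ioc_subset_Icc_self.trans (Icc_subset_Icc le_rfl (le_of_eq (by ring)))
  have hcount : ∀ᵐ ω, ω ∈ I → (N : ℝ≥0∞) ≤ {k : ℤ | ω - k * p ∈ Icc (-B) B}.encard := by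
    filter_upwards [hGramψ] with ω hω hωI
    exact_mod_cast natCast_le_encard_of_posSemidef_gram_sub
      (fun n ξ hξ ↦ FT_lowpass_eq_zero_of_notMem (φ n) hξ) hα' (hω (hI hωI)).1
  have hmain : (N : ℝ≥0∞) * volume I ≤ volume (Icc (-B) B) :=
    calc (N : ℝ≥0∞) * volume I = ∫⁻ _ in I, (N : ℝ≥0∞) := (setLIntegral_const _ _).symm
      _ ≤ ∫⁻ ω in I, ({k : ℤ | ω - k * p ∈ Icc (-B) B}.encard : ℝ≥0∞) :=
        lintegral_mono_ae ((ae_restrict_iff' measurableSet_Ioc).2 hcount)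
      _ ≤ volume (Icc (-B) B) := lintegral_encard_le_volume _ _ measurableSet_Icc
  rw [Real.volume_Ioc, Real.volume_Icc, add_sub_cancel_left, sub_neg_eq_add,
    ← ENNReal.ofReal_natCast, ← ENNReal.ofReal_mul N.cast_nonneg,
    ENNReal.ofReal_le_ofReal_iff (by positivity), show B + B = 2 * π / Tc by ring,
    mul_div_assoc', div_le_div_iff₀ hT hTc, mul_comm _ (2 * π), mul_assoc] at hmain
  exact le_of_mul_le_mul_left hmain two_pi_pos

/-- If the generators `φ` form a Riesz basis (Grammian bounds a.e. on `[-π/T,π/T]`)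
and the lowpass filtered generators `ψ_n = P_{π/T_c} φ_n` also satisfy Riesz bounds
a.e. on `[-π/T, π/T]`, then necessarily `π/T_c ≥ N·π/T`, i.e. `N·T_c ≤ T`. -/
theorem statement1 (T Tc : ℝ) (hT : 0 < T) (hTc : 0 < Tc) (N : ℕ) (hN : 0 < N)
    (φ : Fin N → ℝ → ℂ) (hφ : ∀ n, MemLp (φ n) 2 (volume : Measure ℝ))
    (α β : ℝ) (hα : 0 < α) (hαβ : α ≤ β)
    (hGramφ : ∀ᵐ ω : ℝ, ω ∈ Set.Icc (-(π / T)) (π / T) →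
      (gram T φ ω - (α : ℂ) • 1).PosSemidef ∧
      ((β : ℂ) • 1 - gram T φ ω).PosSemidef)
    (α' β' : ℝ) (hα' : 0 < α') (hαβ' : α' ≤ β')
    (hGramψ : ∀ᵐ ω : ℝ, ω ∈ Set.Icc (-(π / T)) (π / T) →
      (gram T (fun n => lowpass (π / Tc) (φ n)) ω - (α' : ℂ) • 1).PosSemidef ∧
      ((β' : ℂ) • 1 - gram T (fun n => lowpass (π / Tc) (φ n)) ω).PosSemidef) :
    (N : ℝ) * Tc ≤ T :=
  statement1_general T Tc hT hTc N φ α' β' hα' hGramψ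
end

section
/- Let T > 0 and D > 0 with 1 < D/T < 3/2. Define γ̂ : ℝ → ℂ by γ̂(ω) = sinc(ωD) + i·(sinc(ωD − 2πD/T) − sinc(ωD + 2πD/T)). Then γ̂(ω) ≠ 0 for every ω ∈ [−π/T, π/T]. -/
open Real

/-- `sinc u = sin u / u` for `u ≠ 0`, with `sinc 0 = 1`. -/
noncomputable def sinc (u : ℝ) : ℝ := if u = 0 then 1 else Real.sin u / u

/-!
Write `x = ωD` and `a = 2πD/T`, so that `2π < a < 3π` and `|x| ≤ a/2 < 2π`. If `γ̂(ω) = 0`,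
its real part `sinc x` vanishes, which forces `x = ±π`; its imaginary part then says
`sinc(π - a) = sinc(π + a)` (using that `sinc` is even), i.e. `sin a/(π - a) = -sin a/(π + a)`,
which gives `2π sin a = 0`. But `sin a > 0` because `a - 2π ∈ (0, π)`.
-/

theorem sinc_eq_real_sinc : _root_.sinc = Real.sinc := rfl

theorem Real.abs_eq_pi_of_sinc_eq_zero {x : ℝ} (h : Real.sinc x = 0) (hx : |x| < 2 * π) :
    |x| = π := by
  have hx0 : x ≠ 0 := by
    rintro rfl
    simp at h
  rw [Real.sinc_of_ne_zero hx0, div_eq_zero_iff, or_iff_left hx0] at h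
  obtain ⟨n, rfl⟩ := Real.sin_eq_zero_iff.1 h
  have hn0 : n ≠ 0 := by
    rintro rfl
    simp at hx0
  rw [abs_mul, abs_of_pos pi_pos] at hx ⊢
  have hn : |(n : ℝ)| < 2 := lt_of_mul_lt_mul_right hx pi_pos.le
  have hn1 : |n| = 1 := by
    have : |n| < 2 := by exact_mod_cast hn
    have : 0 < |n| := abs_pos.2 hn0
    omega
  rw [← Int.cast_abs, hn1, Int.cast_one, one_mul]

theorem Real.sinc_pi_sub_ne_sinc_pi_add {a : ℝ} (ha : sin a ≠ 0) :
    Real.sinc (π - a) ≠ Real.sinc (π + a) := by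
  have hsub : π - a ≠ 0 := fun h => ha (by rw [← sub_eq_zero.1 h, sin_pi])
  have hadd : π + a ≠ 0 := fun h => ha (by rw [eq_neg_of_add_eq_zero_right h, sin_neg, sin_pi, neg_zero])
  rw [Real.sinc_of_ne_zero hsub, Real.sinc_of_ne_zero hadd, sin_pi_sub, add_comm π a, sin_add_pi,
    add_comm a π]
  intro h
  rw [div_eq_div_iff hsub hadd] at h
  -- `sin a (π + a) = -sin a (π - a)` collapses to `2π sin a = 0`
  have : 2 * π * sin a = 0 := by linarith
  exact ha ((mul_eq_zero.1 this).resolve_left (by positivity))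

theorem Real.sinc_sub_ne_sinc_add_of_abs_eq_pi {x a : ℝ} (hx : |x| = π) (ha : sin a ≠ 0) :
    Real.sinc (x - a) ≠ Real.sinc (x + a) := by
  rcases (abs_eq pi_pos.le).1 hx with rfl | rfl
  · exact Real.sinc_pi_sub_ne_sinc_pi_add ha
  · rw [← Real.sinc_neg (-π - a), ← Real.sinc_neg (-π + a), neg_sub, sub_neg_eq_add, neg_add,
      neg_neg, add_comm, ← sub_eq_add_neg]
    exact (Real.sinc_pi_sub_ne_sinc_pi_add ha).symm

theorem statement11_general (T D : ℝ) (hD : 0 < D)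
    (h1 : 1 < D / T) (h2 : D / T < 3 / 2) :
    ∀ ω ∈ Set.Icc (-(π / T)) (π / T),
      ((_root_.sinc (ω * D) : ℂ) +
        Complex.I * ((_root_.sinc (ω * D - 2 * π * D / T) - _root_.sinc (ω * D + 2 * π * D / T) : ℝ) : ℂ))
        ≠ 0 := by
  intro ω hω h
  rw [sinc_eq_real_sinc] at h
  set a := 2 * π * D / T
  have ha : a = 2 * π * (D / T) := by ring
  have hsin : sin a ≠ 0 := by
    rw [← sin_sub_two_pi]
    exact (sin_pos_of_pos_of_lt_pi (by nlinarith [pi_pos]) (by nlinarith [pi_pos])).ne'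
  have hx : |ω * D| < 2 * π := calc
    |ω * D| = |ω| * D := by rw [abs_mul, abs_of_pos hD]
    _ ≤ π / T * D := by gcongr; exact abs_le.2 hω
    _ = π * (D / T) := by ring
    _ < 2 * π := by nlinarith [pi_pos]
  have hre : Real.sinc (ω * D) = 0 := by simpa using congrArg Complex.re h
  have him : Real.sinc (ω * D - a) = Real.sinc (ω * D + a) := by
    simpa [sub_eq_zero] using congrArg Complex.im h
  exact Real.sinc_sub_ne_sinc_add_of_abs_eq_pi (Real.abs_eq_pi_of_sinc_eq_zero hre hx) hsin him

/-- For `1 < D/T < 3/2`, the Fourier transform of the mixed generator obtained by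
modulating the box generator with `p(t) = 1 + 2 sin(2πt/T)`,
`γ̂(ω) = sinc(ωD) + i(sinc(ωD - 2πD/T) - sinc(ωD + 2πD/T))`,
never vanishes on `[-π/T, π/T]`. -/
theorem statement11 (T D : ℝ) (hT : 0 < T) (hD : 0 < D)
    (h1 : 1 < D / T) (h2 : D / T < 3 / 2) :
    ∀ ω ∈ Set.Icc (-(π / T)) (π / T),
      ((_root_.sinc (ω * D) : ℂ) +
        Complex.I * ((_root_.sinc (ω * D - 2 * π * D / T) - _root_.sinc (ω * D + 2 * π * D / T) : ℝ) : ℂ))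
        ≠ 0 :=
  statement11_general T D hD h1 h2
end
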